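/- Let Γ be a rooted digraph satisfying P0, P1, P2 and P3. Then the digraph obtained from Γ by deleting the root α has at least two infinite connected components. -/

import Mathlib

variable {V : Type*}

/-- Directed walks of length `n` (`n`-arcs). -/
def arcOf (E : V → V → Prop) : ℕ → V → V → Prop
  | 0 => fun x y => x = y
  | n + 1 => fun x y => ∃ z, E x z ∧ arcOf E n z y

/-- Vertices reachable from `x` by a directed path of length exactly `n`. -/
def descN (E : V → V → Prop) (n : ℕ) (x : V) : Set V := {y | arcOf E n x y}

/-- The descendant set of `x` (including `x` itself). -/
def desc (E : V → V → Prop) (x : V) : Set V := {y | ∃ n, arcOf E n x y}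

theorem self_mem_desc (E : V → V → Prop) (x : V) : x ∈ desc E x := ⟨0, by simp [arcOf]⟩

def descSet (E : V → V → Prop) (S : Set V) : Set V := ⋃ x ∈ S, desc E x

theorem self_mem_descSet (E : V → V → Prop) {S : Set V} {x : V} (hx : x ∈ S) :
    x ∈ descSet E S := Set.mem_biUnion hx (self_mem_desc E x)

def outSet (E : V → V → Prop) (x : V) : Set V := {y | E x y}

def inSet (E : V → V → Prop) (x : V) : Set V := {y | E y x}

def IsAut (E : V → V → Prop) (g : Equiv.Perm V) : Prop := ∀ x y, E x y ↔ E (g x) (g y)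

def Rooted (E : V → V → Prop) (α : V) : Prop := ∀ y, y ∈ desc E α

def P0 (E : V → V → Prop) (α : V) (m : ℕ) : Prop :=
  0 < m ∧ (∀ x, (outSet E x).Finite ∧ (outSet E x).ncard = m) ∧
    ∀ s t : ℕ, s ≠ t → Disjoint (descN E s α) (descN E t α)

def P1 (E : V → V → Prop) : Prop :=
  ∀ u : V, ∃ f : desc E u ≃ V, ∀ x y : desc E u, (E x.1 y.1 ↔ E (f x) (f y))

def P2 (E : V → V → Prop) (α : V) : Prop :=
  ∀ i : ℕ, ∀ x ∈ descN E i α, ∀ y ∈ descN E i α,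
    ∃ g : Equiv.Perm V, IsAut E g ∧ g α = α ∧ g x = y

def P3 (E : V → V → Prop) (α : V) : Prop :=
  ∀ i : ℕ, (descN E i α).ncard < (descN E (i + 1) α).ncard

def EdgeTrans (E : V → V → Prop) : Prop :=
  ∀ a b c d : V, E a b → E c d → ∃ g : Equiv.Perm V, IsAut E g ∧ g a = c ∧ g b = d

def VertexTrans (E : V → V → Prop) : Prop :=
  ∀ u v : V, ∃ g : Equiv.Perm V, IsAut E g ∧ g u = v

def NoDirectedCycles (E : V → V → Prop) : Prop :=
  ∀ s : ℕ, 1 ≤ s → ∀ x : V, ¬ arcOf E s x x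

def HasPropZ {W : Type*} (E : W → W → Prop) : Prop :=
  ∃ f : W → ℤ, Function.Surjective f ∧ ∀ x y : W, E x y → f y = f x + 1

def deltaSetoid (E : V → V → Prop) (n : ℕ) : Setoid V :=
  ⟨fun u v => descN E n u = descN E n v, ⟨fun _ => rfl, Eq.symm, Eq.trans⟩⟩

def QEdge (E : V → V → Prop) (n : ℕ)
    (A B : Quotient (deltaSetoid E n)) : Prop :=
  ∃ a b : V, Quotient.mk (deltaSetoid E n) a = A ∧ Quotient.mk (deltaSetoid E n) b = B ∧ E a b

def cls (E : V → V → Prop) (n : ℕ) (v : V) : Set V := {u | descN E n u = descN E n v}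

def QEdgeSet (E : V → V → Prop) (A B : Set V) : Prop := ∃ a ∈ A, ∃ b ∈ B, E a b

def WDH (E : V → V → Prop) : Prop :=
  VertexTrans E ∧
  ∀ (X Y : Finset V) (f : descSet E (↑X : Set V) ≃ descSet E (↑Y : Set V)),
    (∀ a b : descSet E (↑X : Set V), (E a.1 b.1 ↔ E (f a).1 (f b).1)) →
    ∃ g : Equiv.Perm V, IsAut E g ∧
      ∀ (x : V) (hx : x ∈ X), g x = (f ⟨x, self_mem_descSet E (by exact_mod_cast hx)⟩).1

def EdgeT (E : V → V → Prop) := {p : V × V // E p.1 p.2}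

def reachSetoid (E : V → V → Prop) : Setoid (EdgeT E) :=
  ⟨Relation.EqvGen (fun a b => a.1.1 = b.1.1 ∨ a.1.2 = b.1.2),
    Relation.EqvGen.is_equivalence _⟩

def AlSources (E : V → V → Prop) (A : Quotient (reachSetoid E)) : Set V :=
  {v | ∃ e : EdgeT E, Quotient.mk (reachSetoid E) e = A ∧ v = e.1.1}

def AlSinks (E : V → V → Prop) (A : Quotient (reachSetoid E)) : Set V :=
  {v | ∃ e : EdgeT E, Quotient.mk (reachSetoid E) e = A ∧ v = e.1.2}

def AlEdge (E : V → V → Prop) (A B : Quotient (reachSetoid E)) : Prop :=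
  ∃ v, v ∈ AlSinks E A ∧ v ∈ AlSources E B

/-!
Suppose the out-neighbours `L₁` of `α` were connected in `Γ - α`. Transporting a path between
the images of two children of `x` along the isomorphism `desc x ≃ Γ` of P1 (which must send `x`
to `α`) shows that the children of every vertex are connected below it, and then, inductively,
every level `L_{j+1}` is connected inside the part of `Γ` of depth `≥ j + 1`.

The set of level-one ancestors of a vertex only grows along arcs, and by P2 its size is constant
on each level; from a level where this size is maximal on, the set is constant along arcs, hence
constant on a whole level `L_{j+1}`. Then one `u ∈ L₁` is an ancestor of all of `L_{j+1}`, so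
`|L_{j+1}| ≤ |desc_j(u)| ≤ |L_j|`, against P3. So two vertices of `L₁` lie in different
components of `Γ - α`, and each of these contains the infinite descendant set of its vertex.
-/

open Relation

variable {E : V → V → Prop} {α : V} {m : ℕ}

theorem arcOf_add {j r : ℕ} {x y : V} :
    arcOf E (j + r) x y ↔ ∃ z, arcOf E j x z ∧ arcOf E r z y := by
  induction j generalizing x with
  | zero => simp [arcOf]
  | succ j ih =>
    rw [Nat.succ_add]
    simp only [arcOf, ih]
    aesop

theorem arcOf_succ_right {n : ℕ} {x y : V} :
    arcOf E (n + 1) x y ↔ ∃ z, arcOf E n x z ∧ E z y := by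
  rw [arcOf_add]
  simp [arcOf]

theorem arcOf_snoc {n : ℕ} {x y z : V} (h : arcOf E n x y) (hE : E y z) :
    arcOf E (n + 1) x z :=
  arcOf_succ_right.mpr ⟨y, h, hE⟩

theorem arcOf_append {j r : ℕ} {x y z : V} (h₁ : arcOf E j x y) (h₂ : arcOf E r y z) :
    arcOf E (j + r) x z :=
  arcOf_add.mpr ⟨y, h₁, h₂⟩

theorem arcOf_map {W : Type*} {F : W → W → Prop} (f : V → W)
    (hf : ∀ a b, E a b → F (f a) (f b)) {n : ℕ} {x y : V} (h : arcOf E n x y) :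
    arcOf F n (f x) (f y) := by
  induction n generalizing x with
  | zero => exact congrArg f h
  | succ n ih =>
    obtain ⟨z, hxz, hzy⟩ := h
    exact ⟨f z, hf x z hxz, ih hzy⟩

theorem mem_descN_one {x y : V} : y ∈ descN E 1 x ↔ E x y := by
  simp [descN, arcOf]

theorem desc_trans {x y z : V} (hy : y ∈ desc E x) (hz : z ∈ desc E y) : z ∈ desc E x := by
  obtain ⟨n, hn⟩ := hy
  obtain ⟨k, hk⟩ := hz
  exact ⟨n + k, arcOf_append hn hk⟩

theorem descN_nonempty (hne : ∀ x, (outSet E x).Nonempty) (n : ℕ) (x : V) :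
    (descN E n x).Nonempty := by
  induction n with
  | zero => exact ⟨x, rfl⟩
  | succ n ih =>
    obtain ⟨y, hy⟩ := ih
    obtain ⟨z, hz⟩ := hne y
    exact ⟨z, arcOf_snoc hy hz⟩

theorem descN_finite (hfin : ∀ x, (outSet E x).Finite) (n : ℕ) (x : V) :
    (descN E n x).Finite := by
  induction n with
  | zero => exact (Set.finite_singleton x).subset fun y hy => (show x = y from hy).symm
  | succ n ih =>
    refine (ih.biUnion fun y _ => hfin y).subset fun z hz => ?_
    obtain ⟨y, hy, hyz⟩ := arcOf_succ_right.mp hz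
    exact Set.mem_biUnion hy hyz

theorem P0.outSet_nonempty (h0 : P0 E α m) (x : V) : (outSet E x).Nonempty :=
  Set.nonempty_of_ncard_ne_zero (by rw [(h0.2.1 x).2]; exact h0.1.ne')

theorem P0.descN_finite (h0 : P0 E α m) (n : ℕ) (x : V) : (descN E n x).Finite :=
  _root_.descN_finite (fun y => (h0.2.1 y).1) n x

theorem P0.eq_of_mem_descN (h0 : P0 E α m) {x : V} {s t : ℕ}
    (hs : x ∈ descN E s α) (ht : x ∈ descN E t α) : s = t := by
  by_contra hne
  exact Set.disjoint_left.mp (h0.2.2 s t hne) hs ht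

theorem Rooted.exists_edge_to (hroot : Rooted E α) {β : V} (hβ : β ≠ α) : ∃ z, E z β := by
  obtain ⟨_ | s, hs⟩ := hroot β
  · exact absurd (show α = β from hs).symm hβ
  · obtain ⟨z, -, hz⟩ := arcOf_succ_right.mp hs
    exact ⟨z, hz⟩

theorem desc_infinite (hroot : Rooted E α) (h0 : P0 E α m) (x : V) : (desc E x).Infinite := by
  choose F hF using fun n => descN_nonempty h0.outSet_nonempty n x
  obtain ⟨t, ht⟩ := hroot x
  refine Set.infinite_of_injective_forall_mem (f := F) (fun n n' hnn' => ?_)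
    fun n => ⟨n, hF n⟩
  have := h0.eq_of_mem_descN (arcOf_append ht (hF n)) (hnn' ▸ arcOf_append ht (hF n'))
  omega

section Isomorphisms

variable {u : V} (f : desc E u ≃ V)

theorem arcOf_iso_desc (hf : ∀ x y : desc E u, E x.1 y.1 ↔ E (f x) (f y)) {n : ℕ} {y : V}
    (hy : arcOf E n u y) :
    arcOf E n (f ⟨u, self_mem_desc E u⟩) (f ⟨y, n, hy⟩) := by
  induction n generalizing y with
  | zero => subst hy; rfl
  | succ n ih =>
    obtain ⟨z, hz, hzy⟩ := arcOf_succ_right.mp hy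
    exact arcOf_snoc (ih hz) ((hf ⟨z, n, hz⟩ ⟨y, n + 1, hy⟩).mp hzy)

theorem iso_desc_symm_edge (hf : ∀ x y : desc E u, E x.1 y.1 ↔ E (f x) (f y)) {a b : V}
    (h : E a b) : E (f.symm a).1 (f.symm b).1 :=
  (hf _ _).mpr (by simpa using h)

theorem iso_desc_apply_self (hf : ∀ x y : desc E u, E x.1 y.1 ↔ E (f x) (f y))
    (hroot : Rooted E α) (h0 : P0 E α m) : f ⟨u, self_mem_desc E u⟩ = α := by
  by_contra hne
  obtain ⟨z, hz⟩ := hroot.exists_edge_to hne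
  have hzu : E (f.symm z).1 u := by simpa using iso_desc_symm_edge f hf hz
  obtain ⟨t, ht⟩ := hroot u
  obtain ⟨r, hr⟩ := (f.symm z).2
  have hu : u ∈ descN E (t + r + 1) α := arcOf_snoc (arcOf_append ht hr) hzu
  have := h0.eq_of_mem_descN ht hu
  omega

end Isomorphisms

theorem ncard_descN_le (hroot : Rooted E α) (h0 : P0 E α m) (h1 : P1 E) (u : V) (n : ℕ) :
    (descN E n u).ncard ≤ (descN E n α).ncard := by
  obtain ⟨f, hf⟩ := h1 u
  have hsub : descN E n u ⊆ (fun b => (f.symm b).1) '' descN E n α := fun y hy =>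
    ⟨f ⟨y, n, hy⟩, iso_desc_apply_self f hf hroot h0 ▸ arcOf_iso_desc f hf hy, by simp⟩
  exact (Set.ncard_le_ncard hsub ((h0.descN_finite n α).image _)).trans
    (Set.ncard_image_le (h0.descN_finite n α))

def adjOn (E : V → V → Prop) (S : Set V) (a b : V) : Prop :=
  a ∈ S ∧ b ∈ S ∧ (E a b ∨ E b a)

instance (S : Set V) : Std.Symm (adjOn E S) where
  symm _ _ h := ⟨h.2.1, h.1, h.2.2.symm⟩

theorem reflTransGen_adjOn_of_mem_desc {S : Set V} (hS : ∀ a ∈ S, ∀ b, E a b → b ∈ S)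
    {u w : V} (hu : u ∈ S) (hw : w ∈ desc E u) : ReflTransGen (adjOn E S) u w := by
  obtain ⟨n, hn⟩ := hw
  induction n generalizing u with
  | zero => exact hn ▸ ReflTransGen.refl
  | succ n ih =>
    obtain ⟨z, huz, hzw⟩ := hn
    have hz := hS u hu z huz
    exact ReflTransGen.head ⟨hu, hz, Or.inl huz⟩ (ih hz hzw)

def levelsFrom (E : V → V → Prop) (α : V) (j : ℕ) : Set V :=
  {x | ∃ i, j ≤ i ∧ x ∈ descN E i α}

theorem levelsFrom_one (hroot : Rooted E α) (h0 : P0 E α m) : levelsFrom E α 1 = {α}ᶜ := by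
  ext x
  constructor
  · rintro ⟨i, hi, hx⟩ (hxα : x = α)
    have := h0.eq_of_mem_descN (hxα ▸ hx) (show α ∈ descN E 0 α from rfl)
    omega
  · intro hx
    obtain ⟨_ | i, hi⟩ := hroot x
    · exact absurd (show α = x from hi).symm hx
    · exact ⟨i + 1, by omega, hi⟩

theorem edge_mem_levelsFrom {j : ℕ} {a b : V} (ha : a ∈ levelsFrom E α j) (hab : E a b) :
    b ∈ levelsFrom E α j := by
  obtain ⟨i, hi, ha⟩ := ha
  exact ⟨i + 1, by omega, arcOf_snoc ha hab⟩

def LevelConnected (E : V → V → Prop) (α : V) (j : ℕ) : Prop :=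
  ∀ x ∈ descN E j α, ∀ y ∈ descN E j α, ReflTransGen (adjOn E (levelsFrom E α j)) x y

theorem reflTransGen_of_common_parent (hroot : Rooted E α) (h0 : P0 E α m) (h1 : P1 E)
    (H : LevelConnected E α 1) {j : ℕ} {x x' x'' : V} (hx : x ∈ descN E j α)
    (hx' : E x x') (hx'' : E x x'') :
    ReflTransGen (adjOn E (levelsFrom E α (j + 1))) x' x'' := by
  obtain ⟨f, hf⟩ := h1 x
  have hfx := iso_desc_apply_self f hf hroot h0
  let ψ : V → V := fun b => (f.symm b).1
  have hψα : ψ α = x := by simp [ψ, ← hfx]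
  have hψ_levels : ∀ a ∈ levelsFrom E α 1, ψ a ∈ levelsFrom E α (j + 1) := by
    rintro a ⟨i, hi, ha⟩
    refine ⟨j + i, by omega, arcOf_append hx ?_⟩
    simpa [hψα] using arcOf_map ψ (fun _ _ => iso_desc_symm_edge f hf) ha
  have hψ : ∀ a b, adjOn E (levelsFrom E α 1) a b →
      adjOn E (levelsFrom E α (j + 1)) (ψ a) (ψ b) := fun a b ⟨ha, hb, hab⟩ =>
    ⟨hψ_levels a ha, hψ_levels b hb,
      hab.imp (iso_desc_symm_edge f hf) (iso_desc_symm_edge f hf)⟩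
  have hlevel : ∀ y (hy : E x y), f ⟨y, 1, mem_descN_one.mpr hy⟩ ∈ descN E 1 α :=
    fun y hy => mem_descN_one.mpr (hfx ▸ (hf _ _).mp hy)
  simpa [ψ, Function.onFun] using
    ReflTransGen.lift ψ hψ _ _ (H _ (hlevel x' hx') _ (hlevel x'' hx''))

theorem LevelConnected.succ (h0 : P0 E α m) {j : ℕ}
    (hsib : ∀ x ∈ descN E j α, ∀ x' x'', E x x' → E x x'' →
      ReflTransGen (adjOn E (levelsFrom E α (j + 1))) x' x'')
    (H : LevelConnected E α j) : LevelConnected E α (j + 1) := by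
  classical
  choose child hchild using h0.outSet_nonempty
  -- a path at depth `≥ j` is pushed to depth `≥ j + 1` by replacing its level-`j` vertices
  -- with children
  let φ : V → V := fun c => if c ∈ descN E j α then child c else c
  have hφ_edge : ∀ a b, a ∈ levelsFrom E α j → E a b →
      ReflTransGen (adjOn E (levelsFrom E α (j + 1))) (φ a) (φ b) := by
    rintro a b ⟨i, hi, ha⟩ hab
    have hb : b ∈ descN E (i + 1) α := arcOf_snoc ha hab
    have hφb : φ b = b := if_neg fun hb' => by have := h0.eq_of_mem_descN hb hb'; omega
    rw [hφb]
    by_cases haj : a ∈ descN E j α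
    · rw [show φ a = child a from if_pos haj]
      exact hsib a haj _ _ (hchild a) hab
    · rw [show φ a = a from if_neg haj]
      have hij : i ≠ j := fun hij => haj (hij ▸ ha)
      exact ReflTransGen.single ⟨⟨i, by omega, ha⟩, ⟨i + 1, by omega, hb⟩, Or.inl hab⟩
  have hφ : ∀ a b, adjOn E (levelsFrom E α j) a b →
      ReflTransGen (adjOn E (levelsFrom E α (j + 1))) (φ a) (φ b) := by
    rintro a b ⟨ha, hb, hab | hba⟩
    · exact hφ_edge a b ha hab
    · exact Std.Symm.symm _ _ (hφ_edge b a hb hba)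
  intro x' hx' y' hy'
  obtain ⟨x, hx : x ∈ descN E j α, hxx'⟩ := arcOf_succ_right.mp hx'
  obtain ⟨y, hy : y ∈ descN E j α, hyy'⟩ := arcOf_succ_right.mp hy'
  have hpath := ReflTransGen.lift' φ hφ _ _ (H x hx y hy)
  simp only [Function.onFun, φ, if_pos hx, if_pos hy] at hpath
  exact ((hsib x hx _ _ hxx' (hchild x)).trans hpath).trans (hsib y hy _ _ (hchild y) hyy')

theorem levelConnected_of_one (hroot : Rooted E α) (h0 : P0 E α m) (h1 : P1 E)
    (H : LevelConnected E α 1) (j : ℕ) : LevelConnected E α (j + 1) := by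
  induction j with
  | zero => exact H
  | succ j ih =>
    exact ih.succ h0 fun x hx _ _ => reflTransGen_of_common_parent hroot h0 h1 H hx

def levelOneAncestors (E : V → V → Prop) (α z : V) : Set V :=
  {u | u ∈ descN E 1 α ∧ z ∈ desc E u}

theorem levelOneAncestors_subset_of_mem_desc {z z' : V} (h : z' ∈ desc E z) :
    levelOneAncestors E α z ⊆ levelOneAncestors E α z' :=
  fun _ hu => ⟨hu.1, desc_trans hu.2 h⟩

theorem levelOneAncestors_finite (h0 : P0 E α m) (z : V) : (levelOneAncestors E α z).Finite :=
  (h0.descN_finite 1 α).subset fun _ hu => hu.1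

theorem image_levelOneAncestors_subset {g : V → V} (hg : ∀ a b, E a b → E (g a) (g b))
    (hgα : g α = α) (z : V) :
    g '' levelOneAncestors E α z ⊆ levelOneAncestors E α (g z) := by
  rintro _ ⟨u, ⟨hu, n, hn⟩, rfl⟩
  exact ⟨hgα ▸ arcOf_map g hg hu, n, arcOf_map g hg hn⟩

theorem exists_levelOneAncestors_eq_of_edge (hroot : Rooted E α) (h0 : P0 E α m)
    (h2 : P2 E α) : ∃ j, ∀ a ∈ levelsFrom E α j, ∀ b, E a b →
      levelOneAncestors E α a = levelOneAncestors E α b := by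
  let N : V → ℕ := fun z => (levelOneAncestors E α z).ncard
  have hbdd : BddAbove (Set.range N) := ⟨(descN E 1 α).ncard, by
    rintro _ ⟨z, rfl⟩
    exact Set.ncard_le_ncard (fun _ hu => hu.1) (h0.descN_finite 1 α)⟩
  obtain ⟨w₀, hw₀⟩ := Nat.sSup_mem (s := Set.range N) ⟨N α, α, rfl⟩ hbdd
  have hmax : ∀ z, N z ≤ N w₀ := fun z => hw₀ ▸ le_csSup hbdd ⟨z, rfl⟩
  obtain ⟨j, hj⟩ := hroot w₀
  -- by P2 every vertex of the level of `w₀` attains the maximum, hence so do their descendants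
  have hdeep : ∀ a ∈ levelsFrom E α j, N a = N w₀ := by
    rintro a ⟨i, hi, ha⟩
    obtain ⟨w, hw, hwa⟩ :=
      arcOf_add.mp (show arcOf E (j + (i - j)) α a by rwa [Nat.add_sub_cancel' hi])
    obtain ⟨g, hg, hgα, hgw⟩ := h2 j w₀ hj w hw
    refine le_antisymm (hmax a) ?_
    calc N w₀ = (g '' levelOneAncestors E α w₀).ncard :=
          (Set.ncard_image_of_injective _ g.injective).symm
      _ ≤ N w := hgw ▸ Set.ncard_le_ncard
          (image_levelOneAncestors_subset (fun a b => (hg a b).mp) hgα w₀)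
          (levelOneAncestors_finite h0 _)
      _ ≤ N a := Set.ncard_le_ncard (levelOneAncestors_subset_of_mem_desc ⟨i - j, hwa⟩)
          (levelOneAncestors_finite h0 _)
  refine ⟨j, fun a ha b hab => Set.eq_of_subset_of_ncard_le
    (levelOneAncestors_subset_of_mem_desc ⟨1, mem_descN_one.mpr hab⟩) ?_
    (levelOneAncestors_finite h0 b)⟩
  exact (hmax b).trans (hdeep a ha).ge

theorem not_levelConnected_one (hroot : Rooted E α) (h0 : P0 E α m) (h1 : P1 E) (h2 : P2 E α)
    (h3 : P3 E α) : ¬ LevelConnected E α 1 := by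
  intro H
  obtain ⟨j, hj⟩ := exists_levelOneAncestors_eq_of_edge hroot h0 h2
  have hconst : ∀ x ∈ descN E (j + 1) α, ∀ y ∈ descN E (j + 1) α,
      levelOneAncestors E α x = levelOneAncestors E α y := by
    intro x hx y hy
    have hxy := levelConnected_of_one hroot h0 h1 H j x hx y hy
    clear hy
    induction hxy with
    | refl => rfl
    | tail _ hbc ih =>
      obtain ⟨⟨i, hi, hb⟩, ⟨i', hi', hc⟩, hbc | hcb⟩ := hbc
      · exact ih.trans (hj _ ⟨i, by omega, hb⟩ _ hbc)
      · exact ih.trans (hj _ ⟨i', by omega, hc⟩ _ hcb).symm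
  -- a single level-one vertex `u` is then an ancestor of the whole level `j + 1`
  obtain ⟨u, hu⟩ := descN_nonempty h0.outSet_nonempty 1 α
  obtain ⟨xu, hxu⟩ := descN_nonempty h0.outSet_nonempty j u
  have hxu' : xu ∈ descN E (j + 1) α := by rw [Nat.add_comm]; exact arcOf_append hu hxu
  have hsub : descN E (j + 1) α ⊆ descN E j u := by
    intro x hx
    have hux : u ∈ levelOneAncestors E α x := hconst xu hxu' x hx ▸ ⟨hu, j, hxu⟩
    obtain ⟨n, hn⟩ := hux.2
    have := h0.eq_of_mem_descN (arcOf_append hu hn : x ∈ descN E (1 + n) α) hx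
    rwa [show n = j by omega] at hn
  have hfin : (descN E j u).Finite := h0.descN_finite j u
  exact (h3 j).not_ge ((Set.ncard_le_ncard hsub hfin).trans (ncard_descN_le hroot h0 h1 u j))

/-- deleting the root leaves at least two infinite (undirected)
connected components. -/
theorem delete_root_two_infinite_components (E : V → V → Prop) (α : V) (m : ℕ)
    (hroot : Rooted E α) (h0 : P0 E α m) (h1 : P1 E) (h2 : P2 E α) (h3 : P3 E α) :
    ∃ u v : V, u ≠ α ∧ v ≠ α ∧
      ¬ Relation.ReflTransGen (fun a b => a ≠ α ∧ b ≠ α ∧ (E a b ∨ E b a)) u v ∧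
      {w | Relation.ReflTransGen (fun a b => a ≠ α ∧ b ≠ α ∧ (E a b ∨ E b a)) u w}.Infinite ∧
      {w | Relation.ReflTransGen (fun a b => a ≠ α ∧ b ≠ α ∧ (E a b ∨ E b a)) v w}.Infinite := by
  have hdel : (fun a b => a ≠ α ∧ b ≠ α ∧ (E a b ∨ E b a)) = adjOn E (levelsFrom E α 1) := by
    rw [levelsFrom_one hroot h0]
    rfl
  have hne : ∀ x ∈ levelsFrom E α 1, x ≠ α := fun x hx => by
    rwa [levelsFrom_one hroot h0] at hx
  have hinf : ∀ x ∈ levelsFrom E α 1,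
      {w | ReflTransGen (adjOn E (levelsFrom E α 1)) x w}.Infinite := fun x hx =>
    (desc_infinite hroot h0 x).mono fun _ =>
      reflTransGen_adjOn_of_mem_desc (fun _ ha _ hab => edge_mem_levelsFrom ha hab) hx
  obtain ⟨u, hu, v, hv, huv⟩ : ∃ u ∈ descN E 1 α, ∃ v ∈ descN E 1 α,
      ¬ ReflTransGen (adjOn E (levelsFrom E α 1)) u v := by
    simpa [LevelConnected] using not_levelConnected_one hroot h0 h1 h2 h3
  have hu' : u ∈ levelsFrom E α 1 := ⟨1, le_rfl, hu⟩
  have hv' : v ∈ levelsFrom E α 1 := ⟨1, le_rfl, hv⟩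
  rw [hdel]
  exact ⟨u, v, hne u hu', hne v hv', huv, hinf u hu', hinf v hv'⟩
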